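/- arXiv:1309.7209 — 5 statements merged into one kernel-verified Lean document; each statement's English description precedes it below -/
import Mathlib

section
/- Fix ℓ > 0 and let V be a real Gaussian random variable with mean −ℓ²/2 and variance ℓ². Then for every b ∈ ℝ, E[min(1, exp(V + b))] = Φ(−ℓ/2 + b/ℓ) + e^b · Φ(−ℓ/2 − b/ℓ), where Φ denotes the standard normal cumulative distribution function. -/
open MeasureTheory ProbabilityTheory Real

/-- The standard normal cumulative distribution function `Φ`. -/
noncomputable def stdNormalCDF (x : ℝ) : ℝ :=
  ∫ t in Set.Iic x, Real.exp (-t ^ 2 / 2) / Real.sqrt (2 * Real.pi)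

open Set
open scoped ENNReal NNReal

private lemma map_affine (a m : ℝ) (ha : a ≠ 0) :
    Measure.map (fun t : ℝ => a * t + m) volume = ENNReal.ofReal |a⁻¹| • volume := by
  have h : (fun t : ℝ => a * t + m) = (fun x : ℝ => x + m) ∘ (fun x : ℝ => a * x) := rfl
  rw [h, ← Measure.map_map (measurable_add_const m) (measurable_const_mul a),
    Real.map_volume_mul_left ha, Measure.map_smul,
    map_add_right_eq_self volume m]

private lemma integral_affine_Iic (f : ℝ → ℝ) {a : ℝ} (ha : 0 < a) (m c : ℝ) :
    ∫ t in Iic c, f (a * t + m) = a⁻¹ * ∫ x in Iic (a * c + m), f x := by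
  have A : MeasurableEmbedding (fun t : ℝ => a * t + m) :=
    ((Homeomorph.mulLeft₀ a ha.ne').trans (Homeomorph.addRight m)).measurableEmbedding
  have hpre : (fun t : ℝ => a * t + m) ⁻¹' (Iic (a * c + m)) = Iic c := by
    ext x
    simp only [mem_preimage, mem_Iic, add_le_add_iff_right]
    exact ⟨fun h => le_of_mul_le_mul_left h ha, fun h => by nlinarith⟩
  have key := A.setIntegral_map (μ := volume) (g := f) (s := Iic (a * c + m))
  rw [map_affine a m ha.ne', Measure.restrict_smul, integral_smul_measure, abs_of_pos (inv_pos.mpr ha),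
    ENNReal.toReal_ofReal (inv_pos.mpr ha).le, smul_eq_mul, hpre] at key
  exact key.symm

private lemma integral_affine_Ioi (f : ℝ → ℝ) {a : ℝ} (ha : 0 < a) (m c : ℝ) :
    ∫ t in Ioi c, f (a * t + m) = a⁻¹ * ∫ x in Ioi (a * c + m), f x := by
  have A : MeasurableEmbedding (fun t : ℝ => a * t + m) :=
    ((Homeomorph.mulLeft₀ a ha.ne').trans (Homeomorph.addRight m)).measurableEmbedding
  have hpre : (fun t : ℝ => a * t + m) ⁻¹' (Ioi (a * c + m)) = Ioi c := by
    ext x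
    simp only [mem_preimage, mem_Ioi, add_lt_add_iff_right]
    exact ⟨fun h => lt_of_mul_lt_mul_left h ha.le, fun h => by nlinarith⟩
  have key := A.setIntegral_map (μ := volume) (g := f) (s := Ioi (a * c + m))
  rw [map_affine a m ha.ne', Measure.restrict_smul, integral_smul_measure, abs_of_pos (inv_pos.mpr ha),
    ENNReal.toReal_ofReal (inv_pos.mpr ha).le, smul_eq_mul, hpre] at key
  exact key.symm

private lemma gauss_pdf_eval {ℓ : ℝ} (hℓ : 0 < ℓ) (m t : ℝ) :
    gaussianPDFReal m ⟨ℓ ^ 2, sq_nonneg ℓ⟩ (ℓ * t + m)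
      = ℓ⁻¹ * (Real.exp (-t ^ 2 / 2) / Real.sqrt (2 * Real.pi)) := by
  have h2π : (0:ℝ) ≤ 2 * π := by positivity
  simp only [gaussianPDFReal, NNReal.coe_mk, add_sub_cancel_right]
  change (Real.sqrt (2 * π * ℓ ^ 2))⁻¹ * Real.exp (-(ℓ * t) ^ 2 / (2 * ℓ ^ 2)) = _
  rw [Real.sqrt_mul h2π, Real.sqrt_sq hℓ.le, mul_pow]
  have hexp : -(ℓ ^ 2 * t ^ 2) / (2 * ℓ ^ 2) = -t ^ 2 / 2 := by
    field_simp
  rw [hexp, mul_inv]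
  ring

private lemma gauss_Iic {ℓ : ℝ} (hℓ : 0 < ℓ) (m c : ℝ) :
    ∫ x in Set.Iic c, gaussianPDFReal m ⟨ℓ ^ 2, sq_nonneg ℓ⟩ x
      = stdNormalCDF ((c - m) / ℓ) := by
  have hc : ℓ * ((c - m) / ℓ) + m = c := by field_simp; ring
  have h := integral_affine_Iic (gaussianPDFReal m ⟨ℓ ^ 2, sq_nonneg ℓ⟩) hℓ m ((c - m) / ℓ)
  rw [hc] at h
  have h2 : ∫ t in Set.Iic ((c - m) / ℓ), gaussianPDFReal m ⟨ℓ ^ 2, sq_nonneg ℓ⟩ (ℓ * t + m)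
      = ℓ⁻¹ * stdNormalCDF ((c - m) / ℓ) := by
    simp_rw [gauss_pdf_eval hℓ m]
    rw [integral_const_mul]
    rfl
  rw [h2] at h
  exact mul_left_cancel₀ (inv_ne_zero hℓ.ne') h.symm

private lemma gauss_Ioi {ℓ : ℝ} (hℓ : 0 < ℓ) (m c : ℝ) :
    ∫ x in Set.Ioi c, gaussianPDFReal m ⟨ℓ ^ 2, sq_nonneg ℓ⟩ x
      = stdNormalCDF ((m - c) / ℓ) := by
  have hc : ℓ * ((c - m) / ℓ) + m = c := by field_simp; ring
  have h := integral_affine_Ioi (gaussianPDFReal m ⟨ℓ ^ 2, sq_nonneg ℓ⟩) hℓ m ((c - m) / ℓ)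
  rw [hc] at h
  have h2 : ∫ t in Set.Ioi ((c - m) / ℓ), gaussianPDFReal m ⟨ℓ ^ 2, sq_nonneg ℓ⟩ (ℓ * t + m)
      = ℓ⁻¹ * stdNormalCDF ((m - c) / ℓ) := by
    simp_rw [gauss_pdf_eval hℓ m]
    rw [integral_const_mul]
    congr 1
    have hg : ∀ x : ℝ, Real.exp (-(-x) ^ 2 / 2) / Real.sqrt (2 * π)
        = Real.exp (-x ^ 2 / 2) / Real.sqrt (2 * π) := fun x => by rw [neg_sq]
    calc ∫ t in Set.Ioi ((c - m) / ℓ), Real.exp (-t ^ 2 / 2) / Real.sqrt (2 * π)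
        = ∫ t in Set.Ioi ((c - m) / ℓ),
            Real.exp (-(-t) ^ 2 / 2) / Real.sqrt (2 * π) := by simp_rw [neg_sq]
      _ = ∫ t in Set.Iic (-((c - m) / ℓ)),
            Real.exp (-t ^ 2 / 2) / Real.sqrt (2 * π) := by
            exact integral_comp_neg_Ioi ((c - m) / ℓ) (fun x => Real.exp (-x ^ 2 / 2) / Real.sqrt (2 * π))
      _ = stdNormalCDF ((m - c) / ℓ) := by rw [show -((c - m) / ℓ) = (m - c) / ℓ by ring]; rfl
  rw [h2] at h
  exact mul_left_cancel₀ (inv_ne_zero hℓ.ne') h.symm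

private lemma tilt {ℓ : ℝ} (hℓ : 0 < ℓ) (b x : ℝ) :
    gaussianPDFReal (-ℓ ^ 2 / 2) ⟨ℓ ^ 2, sq_nonneg ℓ⟩ x * Real.exp (x + b)
      = Real.exp b * gaussianPDFReal (ℓ ^ 2 / 2) ⟨ℓ ^ 2, sq_nonneg ℓ⟩ x := by
  have h2 : (2 : ℝ) * ℓ ^ 2 ≠ 0 := by positivity
  simp only [gaussianPDFReal, NNReal.coe_mk]
  change (Real.sqrt (2 * π * ℓ ^ 2))⁻¹ * Real.exp (-(x - -ℓ ^ 2 / 2) ^ 2 / (2 * ℓ ^ 2)) * Real.exp (x + b)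
    = Real.exp b * ((Real.sqrt (2 * π * ℓ ^ 2))⁻¹ * Real.exp (-(x - ℓ ^ 2 / 2) ^ 2 / (2 * ℓ ^ 2)))
  rw [mul_assoc, ← Real.exp_add]
  have hexp : -(x - -ℓ ^ 2 / 2) ^ 2 / (2 * ℓ ^ 2) + (x + b)
      = b + -(x - ℓ ^ 2 / 2) ^ 2 / (2 * ℓ ^ 2) := by
    field_simp
    ring
  rw [hexp, Real.exp_add]
  ring

/-- for `V ∼ N(−ℓ²/2, ℓ²)` and any `b ∈ ℝ`,
`E[min(1, exp(V + b))] = Φ(−ℓ/2 + b/ℓ) + e^b Φ(−ℓ/2 − b/ℓ)`. -/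
theorem stmt1 (ℓ : ℝ) (hℓ : 0 < ℓ) (b : ℝ) :
    (∫ v, min 1 (Real.exp (v + b))
        ∂(gaussianReal (-ℓ ^ 2 / 2) ⟨ℓ ^ 2, sq_nonneg ℓ⟩)) =
      stdNormalCDF (-ℓ / 2 + b / ℓ) + Real.exp b * stdNormalCDF (-ℓ / 2 - b / ℓ) := by
  have hv : (⟨ℓ ^ 2, sq_nonneg ℓ⟩ : NNReal) ≠ 0 := by
    intro h
    exact pow_ne_zero 2 hℓ.ne' (congrArg NNReal.toReal h)
  rw [gaussianReal_of_var_ne_zero _ hv]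
  have hpdfmeas := measurable_gaussianPDFReal (-ℓ ^ 2 / 2) ⟨ℓ ^ 2, sq_nonneg ℓ⟩
  have hrw : volume.withDensity (gaussianPDF (-ℓ ^ 2 / 2) ⟨ℓ ^ 2, sq_nonneg ℓ⟩)
      = volume.withDensity
        (fun x => ((gaussianPDFReal (-ℓ ^ 2 / 2) ⟨ℓ ^ 2, sq_nonneg ℓ⟩ x).toNNReal : ℝ≥0∞)) := rfl
  rw [hrw, integral_withDensity_eq_integral_smul hpdfmeas.real_toNNReal]
  have hsmul : ∀ x : ℝ,
      (gaussianPDFReal (-ℓ ^ 2 / 2) ⟨ℓ ^ 2, sq_nonneg ℓ⟩ x).toNNReal • min 1 (Real.exp (x + b))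
      = gaussianPDFReal (-ℓ ^ 2 / 2) ⟨ℓ ^ 2, sq_nonneg ℓ⟩ x * min 1 (Real.exp (x + b)) :=
    fun x => by rw [NNReal.smul_def, Real.coe_toNNReal _ (gaussianPDFReal_nonneg (-ℓ ^ 2 / 2) ⟨ℓ ^ 2, sq_nonneg ℓ⟩ x), smul_eq_mul]
  simp_rw [hsmul]
  set F : ℝ → ℝ :=
    fun x => gaussianPDFReal (-ℓ ^ 2 / 2) ⟨ℓ ^ 2, sq_nonneg ℓ⟩ x * min 1 (Real.exp (x + b))
    with hF
  have hFmeas : Measurable F :=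
    hpdfmeas.mul (measurable_const.min ((measurable_id.add_const b).exp))
  have hFint : Integrable F := by
    refine (integrable_gaussianPDFReal (-ℓ ^ 2 / 2) ⟨ℓ ^ 2, sq_nonneg ℓ⟩).mono hFmeas.aestronglyMeasurable
      (Filter.Eventually.of_forall fun x => ?_)
    rw [Real.norm_eq_abs, Real.norm_eq_abs, abs_of_nonneg (gaussianPDFReal_nonneg (-ℓ ^ 2 / 2) ⟨ℓ ^ 2, sq_nonneg ℓ⟩ x),
      abs_of_nonneg (mul_nonneg (gaussianPDFReal_nonneg (-ℓ ^ 2 / 2) ⟨ℓ ^ 2, sq_nonneg ℓ⟩ x)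
        (le_min zero_le_one (Real.exp_pos _).le))]
    exact mul_le_of_le_one_right (gaussianPDFReal_nonneg _ _ _) (min_le_left _ _)
  rw [← intervalIntegral.integral_Iic_add_Ioi (b := -b) hFint.integrableOn hFint.integrableOn]
  have hIic : ∫ x in Set.Iic (-b), F x = Real.exp b * stdNormalCDF (-ℓ / 2 - b / ℓ) := by
    have e1 : ∀ x ∈ Set.Iic (-b),
        F x = Real.exp b * gaussianPDFReal (ℓ ^ 2 / 2) ⟨ℓ ^ 2, sq_nonneg ℓ⟩ x := by
      intro x hx
      have hx' : x + b ≤ 0 := by simp only [Set.mem_Iic] at hx; linarith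
      have : min 1 (Real.exp (x + b)) = Real.exp (x + b) :=
        min_eq_right (Real.exp_le_one_iff.mpr hx')
      rw [hF]
      simp only [this]
      exact tilt hℓ b x
    rw [setIntegral_congr_fun measurableSet_Iic e1, integral_const_mul, gauss_Iic hℓ]
    congr 1
    field_simp
    ring
  have hIoi : ∫ x in Set.Ioi (-b), F x = stdNormalCDF (-ℓ / 2 + b / ℓ) := by
    have e1 : ∀ x ∈ Set.Ioi (-b),
        F x = gaussianPDFReal (-ℓ ^ 2 / 2) ⟨ℓ ^ 2, sq_nonneg ℓ⟩ x := by
      intro x hx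
      have hx' : (0:ℝ) ≤ x + b := by simp only [Set.mem_Ioi] at hx; linarith
      have : min 1 (Real.exp (x + b)) = 1 := min_eq_left (Real.one_le_exp hx')
      rw [hF]
      simp only [this, mul_one]
    rw [setIntegral_congr_fun measurableSet_Ioi e1, gauss_Ioi hℓ]
    congr 1
    field_simp
    ring
  rw [hIic, hIoi]
  ring
end

section
/- Fix ℓ > 0. Let B be a real random variable with a Lebesgue density ρ satisfying ρ(b) = e^{−b} ρ(−b) for all b, and let V be independent of B with V Gaussian of mean −ℓ²/2 and variance ℓ². Then E[min(1, exp(V + B))] = 2 · E[Φ(B/ℓ − ℓ/2)], where Φ denotes the standard normal cumulative distribution function. -/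
open MeasureTheory ProbabilityTheory Real

lemma phi_eq (t : ℝ) :
    Real.exp (-t ^ 2 / 2) / Real.sqrt (2 * Real.pi) = gaussianPDFReal 0 1 t := by
  simp [gaussianPDFReal, div_eq_mul_inv, mul_comm]

lemma stdNormalCDF_eq (x : ℝ) :
    stdNormalCDF x = ∫ t in Set.Iic x, gaussianPDFReal 0 1 t := by
  unfold stdNormalCDF
  exact setIntegral_congr_fun measurableSet_Iic fun t _ => phi_eq t

lemma integral_comp_neg_real (f : ℝ → ℝ) : ∫ x, f (-x) = ∫ x, f x := by
  have A : MeasurableEmbedding (fun x : ℝ => -x) :=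
    (Homeomorph.neg ℝ).isClosedEmbedding.measurableEmbedding
  conv_rhs => rw [← Measure.map_neg_eq_self (volume : Measure ℝ)]
  rw [A.integral_map]

lemma var_ne_zero {σ : ℝ} (hσ : 0 < σ) : (⟨σ^2, sq_nonneg σ⟩ : NNReal) ≠ 0 := by
  intro h
  have : σ^2 = 0 := congrArg NNReal.toReal h
  exact (pow_ne_zero 2 hσ.ne') this

lemma integral_gaussianPDFReal_Iic (σ m c : ℝ) (hσ : 0 < σ) :
    ∫ x in Set.Iic c, gaussianPDFReal m ⟨σ^2, sq_nonneg σ⟩ x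
      = stdNormalCDF ((c - m)/σ) := by
  have hv := var_ne_zero hσ
  have hmap : (gaussianReal 0 1).map (fun x => σ * x + m)
      = gaussianReal m ⟨σ^2, sq_nonneg σ⟩ := by
    rw [show (fun x : ℝ => σ * x + m) = (fun x => x + m) ∘ (fun x => σ * x) from rfl,
      ← Measure.map_map (measurable_id'.add_const m) (measurable_const_mul σ)]
    rw [show (fun x : ℝ => σ * x) = (σ * ·) from rfl, gaussianReal_map_const_mul,
      gaussianReal_map_add_const]
    norm_num
    rfl
  have h1 : gaussianReal m ⟨σ^2, sq_nonneg σ⟩ (Set.Iic c)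
      = gaussianReal 0 1 (Set.Iic ((c - m)/σ)) := by
    rw [← hmap, Measure.map_apply ((measurable_const_mul σ).add_const m) measurableSet_Iic]
    congr 1
    ext x
    simp only [Set.mem_preimage, Set.mem_Iic, le_div_iff₀ hσ]
    constructor <;> intro h <;> nlinarith
  rw [gaussianReal_apply_eq_integral _ hv, gaussianReal_apply_eq_integral _ one_ne_zero] at h1
  erw [ENNReal.ofReal_eq_ofReal_iff
    (setIntegral_nonneg measurableSet_Iic fun x _ => gaussianPDFReal_nonneg _ _ _)
    (setIntegral_nonneg measurableSet_Iic fun x _ => gaussianPDFReal_nonneg _ _ _)] at h1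
  erw [h1, stdNormalCDF_eq]

lemma gaussianPDFReal_neg (m : ℝ) (v : NNReal) (x : ℝ) :
    gaussianPDFReal m v (-x) = gaussianPDFReal (-m) v x := by
  simp only [gaussianPDFReal]
  ring_nf

lemma integral_gaussianPDFReal_Ici (σ m c : ℝ) (hσ : 0 < σ) :
    ∫ x in Set.Ici c, gaussianPDFReal m ⟨σ^2, sq_nonneg σ⟩ x
      = stdNormalCDF ((m - c)/σ) := by
  rw [integral_Ici_eq_integral_Ioi]
  have : ∫ x in Set.Ioi c, gaussianPDFReal m ⟨σ^2, sq_nonneg σ⟩ x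
      = ∫ x in Set.Ioi c, gaussianPDFReal (-m) ⟨σ^2, sq_nonneg σ⟩ (-x) := by
    refine setIntegral_congr_fun measurableSet_Ioi fun x _ => ?_
    erw [gaussianPDFReal_neg, neg_neg]
  rw [this, integral_comp_neg_Ioi, integral_gaussianPDFReal_Iic _ _ _ hσ]
  ring_nf

lemma exp_aux (c A B u v : ℝ) (h : A + u = B + v) :
    Real.exp u * (c * Real.exp A) = Real.exp v * (c * Real.exp B) := by
  rw [mul_left_comm, mul_left_comm (Real.exp v), ← Real.exp_add, ← Real.exp_add,
    add_comm u, add_comm v, h]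

lemma exp_mul_pdf (ℓ : ℝ) (hℓ : 0 < ℓ) (x b : ℝ) :
    Real.exp (x + b) * gaussianPDFReal (-ℓ^2/2) ⟨ℓ^2, sq_nonneg ℓ⟩ x
      = Real.exp b * gaussianPDFReal (ℓ^2/2) ⟨ℓ^2, sq_nonneg ℓ⟩ x := by
  simp only [gaussianPDFReal, NNReal.coe_mk]
  apply exp_aux
  erw [NNReal.coe_mk]
  field_simp
  ring

lemma min_integrable (b : ℝ) (m : ℝ) (v : NNReal) :
    Integrable (fun x => gaussianPDFReal m v x * min 1 (Real.exp (x + b))) := by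
  refine (integrable_gaussianPDFReal m v).mono
    (((measurable_gaussianPDFReal m v).mul
      (measurable_const.min ((measurable_id.add_const b).exp))).aestronglyMeasurable)
    (ae_of_all _ fun x => ?_)
  have h0 : 0 ≤ min 1 (Real.exp (x + b)) := le_min zero_le_one (Real.exp_pos _).le
  rw [Real.norm_eq_abs, Real.norm_eq_abs,
    abs_of_nonneg (gaussianPDFReal_nonneg _ _ _),
    abs_of_nonneg (mul_nonneg (gaussianPDFReal_nonneg _ _ _) h0)]
  calc gaussianPDFReal m v x * min 1 (Real.exp (x + b))
      ≤ gaussianPDFReal m v x * 1 :=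
        mul_le_mul_of_nonneg_left (min_le_left _ _) (gaussianPDFReal_nonneg _ _ _)
    _ = gaussianPDFReal m v x := mul_one _

lemma inner_gauss (ℓ : ℝ) (hℓ : 0 < ℓ) (b : ℝ) :
    ∫ v, min 1 (Real.exp (v + b)) ∂(gaussianReal (-ℓ ^ 2 / 2) ⟨ℓ ^ 2, sq_nonneg ℓ⟩)
      = stdNormalCDF (b / ℓ - ℓ / 2) + Real.exp b * stdNormalCDF (-b / ℓ - ℓ / 2) := by
  have hv := var_ne_zero hℓ
  erw [gaussianReal_of_var_ne_zero _ hv, gaussianPDF_def]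
  erw [show (fun x => ENNReal.ofReal (gaussianPDFReal (-ℓ^2/2) ⟨ℓ^2, sq_nonneg ℓ⟩ x))
      = (fun x => ((Real.toNNReal (gaussianPDFReal (-ℓ^2/2) ⟨ℓ^2, sq_nonneg ℓ⟩ x) : NNReal) : ENNReal))
      from rfl]
  erw [integral_withDensity_eq_integral_smul
    ((measurable_gaussianPDFReal _ _).real_toNNReal) _]
  have hsm : ∀ x : ℝ, (Real.toNNReal (gaussianPDFReal (-ℓ^2/2) ⟨ℓ^2, sq_nonneg ℓ⟩ x))
      • min 1 (Real.exp (x + b))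
      = gaussianPDFReal (-ℓ^2/2) ⟨ℓ^2, sq_nonneg ℓ⟩ x * min 1 (Real.exp (x + b)) := by
    intro x
    erw [NNReal.smul_def, Real.coe_toNNReal _ (gaussianPDFReal_nonneg _ _ _), smul_eq_mul]
  simp_rw [hsm]
  erw [← intervalIntegral.integral_Iio_add_Ici (b := -b) ((min_integrable b _ _).integrableOn)
    ((min_integrable b _ _).integrableOn)]
  have hIci : ∫ x in Set.Ici (-b), gaussianPDFReal (-ℓ^2/2) ⟨ℓ^2, sq_nonneg ℓ⟩ x
      * min 1 (Real.exp (x + b))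
      = stdNormalCDF (b / ℓ - ℓ / 2) := by
    have : ∫ x in Set.Ici (-b), gaussianPDFReal (-ℓ^2/2) ⟨ℓ^2, sq_nonneg ℓ⟩ x
        * min 1 (Real.exp (x + b))
        = ∫ x in Set.Ici (-b), gaussianPDFReal (-ℓ^2/2) ⟨ℓ^2, sq_nonneg ℓ⟩ x := by
      refine setIntegral_congr_fun measurableSet_Ici fun x hx => ?_
      erw [min_eq_left (Real.one_le_exp (by simp only [Set.mem_Ici] at hx; linarith)), mul_one]
    erw [this, integral_gaussianPDFReal_Ici _ _ _ hℓ]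
    congr 1
    field_simp
    ring
  have hIio : ∫ x in Set.Iio (-b), gaussianPDFReal (-ℓ^2/2) ⟨ℓ^2, sq_nonneg ℓ⟩ x
      * min 1 (Real.exp (x + b))
      = Real.exp b * stdNormalCDF (-b / ℓ - ℓ / 2) := by
    have h1 : ∫ x in Set.Iio (-b), gaussianPDFReal (-ℓ^2/2) ⟨ℓ^2, sq_nonneg ℓ⟩ x
        * min 1 (Real.exp (x + b))
        = ∫ x in Set.Iio (-b), Real.exp b * gaussianPDFReal (ℓ^2/2) ⟨ℓ^2, sq_nonneg ℓ⟩ x := by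
      refine setIntegral_congr_fun measurableSet_Iio fun x hx => ?_
      simp only [Set.mem_Iio] at hx
      erw [min_eq_right (Real.exp_le_one_iff.2 (by linarith)), mul_comm, exp_mul_pdf ℓ hℓ]
    erw [h1, integral_const_mul, setIntegral_congr_set (Iio_ae_eq_Iic),
      integral_gaussianPDFReal_Iic _ _ _ hℓ]
    congr 2
    field_simp
  erw [hIci, hIio, add_comm]

lemma stdNormalCDF_nonneg (x : ℝ) : 0 ≤ stdNormalCDF x := by
  rw [stdNormalCDF_eq]
  exact setIntegral_nonneg measurableSet_Iic fun t _ => gaussianPDFReal_nonneg _ _ _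

lemma stdNormalCDF_le_one (x : ℝ) : stdNormalCDF x ≤ 1 := by
  rw [stdNormalCDF_eq]
  calc ∫ t in Set.Iic x, gaussianPDFReal 0 1 t
      ≤ ∫ t, gaussianPDFReal 0 1 t :=
        setIntegral_le_integral (integrable_gaussianPDFReal 0 1)
          (ae_of_all _ fun t => gaussianPDFReal_nonneg _ _ _)
    _ = 1 := integral_gaussianPDFReal_eq_one 0 one_ne_zero

lemma stdNormalCDF_mono : Monotone stdNormalCDF := by
  intro a c hac
  rw [stdNormalCDF_eq, stdNormalCDF_eq]
  refine setIntegral_mono_set ((integrable_gaussianPDFReal 0 1).integrableOn)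
    (ae_of_all _ fun t => gaussianPDFReal_nonneg _ _ _)
    (HasSubset.Subset.eventuallyLE (Set.Iic_subset_Iic.2 hac))

lemma stdNormalCDF_measurable : Measurable stdNormalCDF :=
  stdNormalCDF_mono.measurable

/-- if `B` has Lebesgue density `ρ` with `ρ(b) = e^{−b} ρ(−b)` and
`V ∼ N(−ℓ²/2, ℓ²)` is independent of `B`, then
`E[min(1, exp(V + B))] = 2 E[Φ(B/ℓ − ℓ/2)]`. -/
theorem stmt2 (ℓ : ℝ) (hℓ : 0 < ℓ)
    (ρ : ℝ → ℝ) (hρ_meas : Measurable ρ) (hρ_nonneg : ∀ b, 0 ≤ ρ b)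
    (μB : Measure ℝ)
    (hμB : μB = volume.withDensity fun b => ENNReal.ofReal (ρ b))
    (hμB_prob : IsProbabilityMeasure μB)
    (hρ_sym : ∀ b, ρ b = Real.exp (-b) * ρ (-b)) :
    (∫ p : ℝ × ℝ, min 1 (Real.exp (p.1 + p.2))
        ∂((gaussianReal (-ℓ ^ 2 / 2) ⟨ℓ ^ 2, sq_nonneg ℓ⟩).prod μB)) =
      2 * ∫ b, stdNormalCDF (b / ℓ - ℓ / 2) ∂μB := by
  have hv := var_ne_zero hℓ
  haveI := instIsProbabilityMeasureGaussianReal (-ℓ ^ 2 / 2) ⟨ℓ ^ 2, sq_nonneg ℓ⟩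
  -- integrability on the product
  have hmeas_min : ∀ b : ℝ, Measurable fun x : ℝ => min 1 (Real.exp (x + b)) :=
    fun b => measurable_const.min ((measurable_id.add_const b).exp)
  have hint : Integrable (fun p : ℝ × ℝ => min 1 (Real.exp (p.1 + p.2)))
      ((gaussianReal (-ℓ ^ 2 / 2) ⟨ℓ ^ 2, sq_nonneg ℓ⟩).prod μB) := by
    refine Integrable.mono' (integrable_const 1)
      ((Continuous.min continuous_const
        (Real.continuous_exp.comp (continuous_fst.add continuous_snd))).aestronglyMeasurable)
      (ae_of_all _ fun p => ?_)
    rw [Real.norm_eq_abs, abs_of_nonneg (le_min zero_le_one (Real.exp_pos _).le)]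
    exact min_le_left _ _
  rw [integral_prod_symm _ hint]
  simp only [inner_gauss ℓ hℓ]
  -- bound on the tilted term
  have hbound : ∀ b : ℝ, Real.exp b * stdNormalCDF (-b / ℓ - ℓ / 2) ≤ 1 := by
    intro b
    have hG : (∫ v, min 1 (Real.exp (v + b))
        ∂(gaussianReal (-ℓ ^ 2 / 2) ⟨ℓ ^ 2, sq_nonneg ℓ⟩)) ≤ 1 := by
      calc (∫ v, min 1 (Real.exp (v + b))
          ∂(gaussianReal (-ℓ ^ 2 / 2) ⟨ℓ ^ 2, sq_nonneg ℓ⟩))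
          ≤ ∫ _, (1:ℝ) ∂(gaussianReal (-ℓ ^ 2 / 2) ⟨ℓ ^ 2, sq_nonneg ℓ⟩) := by
            refine integral_mono ?_ (integrable_const 1) (fun v => min_le_left _ _)
            refine Integrable.mono' (integrable_const 1)
              (hmeas_min b).aestronglyMeasurable (ae_of_all _ fun x => ?_)
            rw [Real.norm_eq_abs, abs_of_nonneg (le_min zero_le_one (Real.exp_pos _).le)]
            exact min_le_left _ _
        _ = 1 := by simp
    rw [inner_gauss ℓ hℓ b] at hG
    have := stdNormalCDF_nonneg (b / ℓ - ℓ / 2)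
    linarith
  have hmeas1 : Measurable fun b : ℝ => stdNormalCDF (b / ℓ - ℓ / 2) :=
    stdNormalCDF_measurable.comp ((measurable_id.div_const ℓ).sub_const (ℓ / 2))
  have hmeas2 : Measurable fun b : ℝ => Real.exp b * stdNormalCDF (-b / ℓ - ℓ / 2) :=
    Real.measurable_exp.mul
      (stdNormalCDF_measurable.comp ((measurable_id.neg.div_const ℓ).sub_const (ℓ / 2)))
  have hI1 : Integrable (fun b : ℝ => stdNormalCDF (b / ℓ - ℓ / 2)) μB := by
    refine Integrable.mono' (integrable_const 1) hmeas1.aestronglyMeasurable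
      (ae_of_all _ fun b => ?_)
    rw [Real.norm_eq_abs, abs_of_nonneg (stdNormalCDF_nonneg _)]
    exact stdNormalCDF_le_one _
  have hI2 : Integrable (fun b : ℝ => Real.exp b * stdNormalCDF (-b / ℓ - ℓ / 2)) μB := by
    refine Integrable.mono' (integrable_const 1) hmeas2.aestronglyMeasurable
      (ae_of_all _ fun b => ?_)
    rw [Real.norm_eq_abs, abs_of_nonneg
      (mul_nonneg (Real.exp_pos _).le (stdNormalCDF_nonneg _))]
    exact hbound b
  rw [integral_add hI1 hI2]
  -- the tilt/symmetry step
  have htilt : ∫ b, Real.exp b * stdNormalCDF (-b / ℓ - ℓ / 2) ∂μB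
      = ∫ b, stdNormalCDF (b / ℓ - ℓ / 2) ∂μB := by
    rw [hμB]
    rw [show (fun b => ENNReal.ofReal (ρ b))
        = (fun b => ((Real.toNNReal (ρ b) : NNReal) : ENNReal)) from rfl]
    rw [integral_withDensity_eq_integral_smul hρ_meas.real_toNNReal,
      integral_withDensity_eq_integral_smul hρ_meas.real_toNNReal]
    have hsm : ∀ (b r : ℝ), (Real.toNNReal (ρ b)) • r = ρ b * r := fun b r => by
      rw [NNReal.smul_def, Real.coe_toNNReal _ (hρ_nonneg b), smul_eq_mul]
    simp_rw [hsm]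
    have key : ∀ b : ℝ, ρ b * (Real.exp b * stdNormalCDF (-b / ℓ - ℓ / 2))
        = (fun x => ρ x * stdNormalCDF (x / ℓ - ℓ / 2)) (-b) := by
      intro b
      have h1 : ρ b * Real.exp b = ρ (-b) := by
        rw [hρ_sym b, mul_comm (Real.exp (-b)), mul_assoc, ← Real.exp_add]
        simp
      simp only [neg_div]
      rw [← mul_assoc, h1]
    simp_rw [key]
    exact integral_comp_neg_real (fun x => ρ x * stdNormalCDF (x / ℓ - ℓ / 2))
  rw [htilt]
  ring
end

section
/- (Reduction of the joint optimisation by symmetry.) Define G : (0,∞)² → ℝ by G(τ, ℓ) = τ² ℓ² Φ(−√(τ² + ℓ²)/2), where Φ is the standard normal cumulative distribution function. Then: (i) for every fixed s > 0, among all τ, ℓ > 0 with τ² + ℓ² = s, the value G(τ, ℓ) = τ² ℓ² Φ(−√s/2) is maximised exactly when τ² = ℓ² = s/2; (ii) consequently sup_{τ,ℓ>0} G(τ, ℓ) = sup_{σ>0} 4 σ⁴ Φ(−σ), and (τ, ℓ) maximises G if and only if τ = ℓ = √2·σ for some σ > 0 maximising σ ↦ σ⁴ Φ(−σ). -/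
open MeasureTheory ProbabilityTheory Real

lemma gauss_integrable : Integrable (fun t : ℝ => Real.exp (-t ^ 2 / 2) / Real.sqrt (2 * Real.pi)) := by
  have h := (integrable_exp_neg_mul_sq (by norm_num : (0:ℝ) < 1/2)).const_mul (Real.sqrt (2 * Real.pi))⁻¹
  convert h using 2 with t
  rw [div_eq_inv_mul]
  ring_nf

lemma Phi_pos (x : ℝ) : 0 < stdNormalCDF x := by
  unfold stdNormalCDF
  have hint : IntegrableOn (fun t : ℝ => Real.exp (-t ^ 2 / 2) / Real.sqrt (2 * Real.pi)) (Set.Iic x) :=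
    gauss_integrable.integrableOn
  rw [setIntegral_pos_iff_support_of_nonneg_ae (Filter.Eventually.of_forall (fun t => by positivity)) hint]
  have hsupp : Function.support (fun t : ℝ => Real.exp (-t ^ 2 / 2) / Real.sqrt (2 * Real.pi)) = Set.univ := by
    ext t; simp only [Function.mem_support, Set.mem_univ, iff_true]
    positivity
  rw [hsupp, Set.univ_inter, Real.volume_Iic]
  exact ENNReal.zero_lt_top

/-- reduction of the joint optimisation by symmetry, for
`G(τ, ℓ) = τ² ℓ² Φ(−√(τ² + ℓ²)/2)`:
(i) on each sphere `τ² + ℓ² = s`, `G` is maximised exactly at `τ² = ℓ² = s/2`;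
(ii) `sup G = sup_σ 4σ⁴Φ(−σ)`, and `(τ, ℓ)` maximises `G` iff
`τ = ℓ = √2 σ` for some maximiser `σ` of `σ⁴Φ(−σ)`. -/
theorem stmt11 (G : ℝ → ℝ → ℝ)
    (hG : ∀ τ ℓ, G τ ℓ = τ ^ 2 * ℓ ^ 2 * stdNormalCDF (-Real.sqrt (τ ^ 2 + ℓ ^ 2) / 2)) :
    (∀ s > (0 : ℝ), ∀ τ > (0 : ℝ), ∀ ℓ > (0 : ℝ), τ ^ 2 + ℓ ^ 2 = s →
      G τ ℓ ≤ G (Real.sqrt (s / 2)) (Real.sqrt (s / 2)) ∧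
        (G τ ℓ = G (Real.sqrt (s / 2)) (Real.sqrt (s / 2)) ↔
          τ ^ 2 = s / 2 ∧ ℓ ^ 2 = s / 2)) ∧
    sSup {y | ∃ τ > (0 : ℝ), ∃ ℓ > (0 : ℝ), y = G τ ℓ} =
      sSup {y | ∃ σ > (0 : ℝ), y = 4 * σ ^ 4 * stdNormalCDF (-σ)} ∧
    (∀ τ > (0 : ℝ), ∀ ℓ > (0 : ℝ),
      ((∀ τ' > (0 : ℝ), ∀ ℓ' > (0 : ℝ), G τ' ℓ' ≤ G τ ℓ) ↔
        ∃ σ > (0 : ℝ), τ = Real.sqrt 2 * σ ∧ ℓ = Real.sqrt 2 * σ ∧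
          ∀ σ' > (0 : ℝ),
            σ' ^ 4 * stdNormalCDF (-σ') ≤ σ ^ 4 * stdNormalCDF (-σ))) := by
  -- value of G on the diagonal point √2·σ
  have hcorr : ∀ σ : ℝ, 0 < σ →
      G (Real.sqrt 2 * σ) (Real.sqrt 2 * σ) = 4 * σ ^ 4 * stdNormalCDF (-σ) := by
    intro σ hσ
    rw [hG]
    have h1 : (Real.sqrt 2 * σ) ^ 2 = 2 * σ ^ 2 := by
      rw [mul_pow, Real.sq_sqrt (by norm_num : (0:ℝ) ≤ 2)]
    rw [h1]
    have h2 : Real.sqrt (2 * σ ^ 2 + 2 * σ ^ 2) = 2 * σ := by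
      rw [show 2 * σ ^ 2 + 2 * σ ^ 2 = (2 * σ) ^ 2 by ring, Real.sqrt_sq (by linarith)]
    rw [h2, show -(2 * σ) / 2 = -σ by ring]
    ring
  -- √(s/2) = √2 · (√s / 2)
  have hmid : ∀ s : ℝ, 0 < s → Real.sqrt (s / 2) = Real.sqrt 2 * (Real.sqrt s / 2) := by
    intro s hs
    rw [show s / 2 = (Real.sqrt 2 * (Real.sqrt s / 2)) ^ 2 by
      rw [mul_pow, div_pow, Real.sq_sqrt (by norm_num : (0:ℝ) ≤ 2), Real.sq_sqrt hs.le]; ring]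
    exact Real.sqrt_sq (by positivity)
  -- value of G at the sphere-midpoint
  have hGmid : ∀ s : ℝ, 0 < s →
      G (Real.sqrt (s / 2)) (Real.sqrt (s / 2)) =
        4 * (Real.sqrt s / 2) ^ 4 * stdNormalCDF (-(Real.sqrt s / 2)) := by
    intro s hs
    rw [hmid s hs]
    exact hcorr _ (by positivity)
  -- part (i)
  have part1 : ∀ s > (0 : ℝ), ∀ τ > (0 : ℝ), ∀ ℓ > (0 : ℝ), τ ^ 2 + ℓ ^ 2 = s →
      G τ ℓ ≤ G (Real.sqrt (s / 2)) (Real.sqrt (s / 2)) ∧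
        (G τ ℓ = G (Real.sqrt (s / 2)) (Real.sqrt (s / 2)) ↔
          τ ^ 2 = s / 2 ∧ ℓ ^ 2 = s / 2) := by
    intro s hs τ hτ ℓ hℓ hsum
    have hC := Phi_pos (-Real.sqrt s / 2)
    have hGτ : G τ ℓ = τ ^ 2 * ℓ ^ 2 * stdNormalCDF (-Real.sqrt s / 2) := by
      rw [hG, hsum]
    have hGm : G (Real.sqrt (s / 2)) (Real.sqrt (s / 2)) =
        (s / 2) ^ 2 * stdNormalCDF (-Real.sqrt s / 2) := by
      have h4 : (Real.sqrt s / 2) ^ 4 = s ^ 2 / 16 := by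
        rw [div_pow, show (Real.sqrt s) ^ 4 = ((Real.sqrt s) ^ 2) ^ 2 by ring,
          Real.sq_sqrt hs.le]
        norm_num
      rw [hGmid s hs, h4, show -(Real.sqrt s / 2) = -Real.sqrt s / 2 by ring]
      ring
    have hab : τ ^ 2 * ℓ ^ 2 ≤ (s / 2) ^ 2 := by nlinarith [sq_nonneg (τ ^ 2 - ℓ ^ 2)]
    refine ⟨by rw [hGτ, hGm]; exact mul_le_mul_of_nonneg_right hab hC.le, ?_, ?_⟩
    · intro he
      rw [hGτ, hGm] at he
      have h := mul_right_cancel₀ (ne_of_gt hC) he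
      constructor <;> nlinarith [sq_nonneg (τ ^ 2 - ℓ ^ 2)]
    · rintro ⟨h1, h2⟩
      rw [hGτ, hGm, h1, h2]
      ring
  refine ⟨part1, ?_, ?_⟩
  · -- sSup equality
    set A := {y | ∃ τ > (0 : ℝ), ∃ ℓ > (0 : ℝ), y = G τ ℓ} with hA
    set B := {y | ∃ σ > (0 : ℝ), y = 4 * σ ^ 4 * stdNormalCDF (-σ)} with hB
    have hBA : B ⊆ A := by
      rintro y ⟨σ, hσ, rfl⟩
      exact ⟨Real.sqrt 2 * σ, by positivity, Real.sqrt 2 * σ, by positivity, (hcorr σ hσ).symm⟩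
    have hAne : A.Nonempty := ⟨G 1 1, 1, one_pos, 1, one_pos, rfl⟩
    have hBne : B.Nonempty := ⟨_, 1, one_pos, rfl⟩
    have hdom : ∀ a ∈ A, ∃ b ∈ B, a ≤ b := by
      rintro a ⟨τ, hτ, ℓ, hℓ, rfl⟩
      have hs : 0 < τ ^ 2 + ℓ ^ 2 := by positivity
      refine ⟨G (Real.sqrt ((τ ^ 2 + ℓ ^ 2) / 2)) (Real.sqrt ((τ ^ 2 + ℓ ^ 2) / 2)), ?_, ?_⟩
      · rw [hGmid _ hs]
        exact ⟨Real.sqrt (τ ^ 2 + ℓ ^ 2) / 2, by positivity, rfl⟩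
      · exact (part1 _ hs τ hτ ℓ hℓ rfl).1
    by_cases hb : BddAbove B
    · obtain ⟨M, hM⟩ := hb
      have ha : BddAbove A := ⟨M, fun a haA => by
        obtain ⟨b, hbB, hab⟩ := hdom a haA; exact hab.trans (hM hbB)⟩
      refine le_antisymm (csSup_le hAne fun a haA => ?_) (csSup_le_csSup ha hBne hBA)
      obtain ⟨b, hbB, hab⟩ := hdom a haA
      exact hab.trans (le_csSup ⟨M, hM⟩ hbB)
    · have ha : ¬ BddAbove A := fun h => hb (h.mono hBA)
      rw [Real.sSup_of_not_bddAbove ha, Real.sSup_of_not_bddAbove hb]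
  · -- maximiser characterisation
    intro τ hτ ℓ hℓ
    constructor
    · intro hmax
      have hs : 0 < τ ^ 2 + ℓ ^ 2 := by positivity
      set s := τ ^ 2 + ℓ ^ 2 with hsdef
      have hm : 0 < Real.sqrt (s / 2) := Real.sqrt_pos.mpr (by linarith)
      have h1 := part1 s hs τ hτ ℓ hℓ rfl
      have h2 := hmax _ hm _ hm
      have heq : G τ ℓ = G (Real.sqrt (s / 2)) (Real.sqrt (s / 2)) := le_antisymm h1.1 h2
      obtain ⟨hτ2, hℓ2⟩ := h1.2.mp heq
      have hτℓ : τ = ℓ := by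
        rw [← Real.sqrt_sq hτ.le, ← Real.sqrt_sq hℓ.le, hτ2, hℓ2]
      refine ⟨τ / Real.sqrt 2, by positivity, ?_, ?_, ?_⟩
      · field_simp
      · rw [hτℓ]; field_simp
      · intro σ' hσ'
        have hστ : Real.sqrt 2 * (τ / Real.sqrt 2) = τ := by field_simp
        have h3 := hmax (Real.sqrt 2 * σ') (by positivity) (Real.sqrt 2 * σ') (by positivity)
        rw [hcorr σ' hσ'] at h3
        have h4 : G τ ℓ = 4 * (τ / Real.sqrt 2) ^ 4 * stdNormalCDF (-(τ / Real.sqrt 2)) := by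
          rw [← hcorr (τ / Real.sqrt 2) (by positivity), hστ, hτℓ]
        rw [h4] at h3
        linarith
    · rintro ⟨σ, hσ, rfl, hℓeq, hσmax⟩
      intro τ' hτ' ℓ' hℓ'
      have hs' : 0 < τ' ^ 2 + ℓ' ^ 2 := by positivity
      have h1 := (part1 _ hs' τ' hτ' ℓ' hℓ' rfl).1
      have h2 : G (Real.sqrt ((τ' ^ 2 + ℓ' ^ 2) / 2)) (Real.sqrt ((τ' ^ 2 + ℓ' ^ 2) / 2)) =
          4 * (Real.sqrt (τ' ^ 2 + ℓ' ^ 2) / 2) ^ 4 *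
            stdNormalCDF (-(Real.sqrt (τ' ^ 2 + ℓ' ^ 2) / 2)) := hGmid _ hs'
      have h3 := hσmax (Real.sqrt (τ' ^ 2 + ℓ' ^ 2) / 2) (by positivity)
      rw [hℓeq, hcorr σ hσ]
      calc G τ' ℓ' ≤ _ := h1
        _ = _ := h2
        _ ≤ 4 * σ ^ 4 * stdNormalCDF (-σ) := by linarith
end

section
/- (Lemma 1, part 1: averaged drift and diffusion coefficients.) Fix ℓ > 0. Let g* be a probability density on ℝ with ∫ e^w g*(w) dw = 1, let Ω be Gaussian with mean −ℓ²/2 and variance ℓ², let W* have density g*, and let W have density e^w g*(w), with Ω, W*, W mutually independent. Define F(u) = min(1, e^u) and F′(u) = e^u · 1_{u<0}, and set a(w) = E[F′(Ω + W* − w)] and b(w) = (1/2) E[F(Ω + W* − w)]. Then E[a(W)] = E[b(W)] = (1/2) α(ℓ), where α(ℓ) = E[F(Ω + W* − W)] = 2 E[Φ((W* − W)/ℓ − ℓ/2)] and Φ is the standard normal cumulative distribution function. -/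
open MeasureTheory ProbabilityTheory Real

namespace Stmt16Aux

noncomputable def phi (x : ℝ) : ℝ := Real.exp (-x ^ 2 / 2) / Real.sqrt (2 * Real.pi)

lemma phi_nonneg (x : ℝ) : 0 ≤ phi x := div_nonneg (Real.exp_nonneg _) (Real.sqrt_nonneg _)

lemma measurable_phi : Measurable phi := by unfold phi; fun_prop

lemma integrable_phi : Integrable phi := by
  have h : Integrable (fun x : ℝ => Real.exp (-(1/2) * x ^ 2) / Real.sqrt (2 * Real.pi)) :=
    (integrable_exp_neg_mul_sq (by norm_num)).div_const _
  refine h.congr (Filter.Eventually.of_forall fun x => ?_)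
  unfold phi
  simp only []
  rw [show -(1/2:ℝ) * x ^ 2 = -x ^ 2 / 2 by ring]

lemma integral_phi : ∫ x, phi x = 1 := by
  unfold phi
  rw [integral_div]
  have h : ∫ x : ℝ, Real.exp (-x ^ 2 / 2) = ∫ x : ℝ, Real.exp (-(1/2) * x ^ 2) := by
    congr 1 with x; ring_nf
  rw [h, integral_gaussian]
  rw [show (π / (1/2)) = 2 * π by ring]
  exact div_self (by positivity)

lemma phi_even (x : ℝ) : phi (-x) = phi x := by simp [phi, neg_sq]

lemma stdNormalCDF_eq (t : ℝ) : stdNormalCDF t = ∫ x in Set.Iic t, phi x := rfl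

lemma S1 (t : ℝ) : ∫ x, (if x ≤ t then phi x else 0) = stdNormalCDF t := by
  rw [stdNormalCDF_eq, ← integral_indicator measurableSet_Iic]
  rfl

lemma S1' (t : ℝ) : ∫ x, (if x < t then phi x else 0) = stdNormalCDF t := by
  rw [stdNormalCDF_eq, integral_Iic_eq_integral_Iio, ← integral_indicator measurableSet_Iio]
  rfl

lemma S2 (t : ℝ) : ∫ x, (if t ≤ x then phi x else 0) = stdNormalCDF (-t) := by
  rw [← integral_neg_eq_self (fun x => if t ≤ x then phi x else 0) volume]
  rw [← S1 (-t)]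
  congr 1 with x
  rw [phi_even]
  by_cases h : t ≤ -x
  · rw [if_pos h, if_pos (le_neg.mp h)]
  · rw [if_neg h, if_neg (fun h' => h (le_neg.mpr h'))]

lemma cdf_nonneg (t : ℝ) : 0 ≤ stdNormalCDF t := by
  rw [stdNormalCDF_eq]
  exact setIntegral_nonneg measurableSet_Iic fun x _ => phi_nonneg x

lemma cdf_le_one (t : ℝ) : stdNormalCDF t ≤ 1 := by
  rw [stdNormalCDF_eq, ← integral_phi]
  exact setIntegral_le_integral integrable_phi (Filter.Eventually.of_forall phi_nonneg)

lemma cdf_mono : Monotone stdNormalCDF := by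
  intro s t hst
  rw [stdNormalCDF_eq, stdNormalCDF_eq]
  exact setIntegral_mono_set integrable_phi.integrableOn
    (Filter.Eventually.of_forall fun x => phi_nonneg x)
    (HasSubset.Subset.eventuallyLE (Set.Iic_subset_Iic.2 hst))

lemma cdf_measurable : Measurable stdNormalCDF := cdf_mono.measurable

section Gauss
variable {ℓ : ℝ}

lemma v_ne_zero (hℓ : 0 < ℓ) : (⟨ℓ^2, sq_nonneg ℓ⟩ : NNReal) ≠ 0 := by
  intro h
  apply pow_ne_zero 2 hℓ.ne'
  exact congrArg NNReal.toReal h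

lemma integral_withDensity_ofReal {f : ℝ → ℝ} (hf : Measurable f) (hf0 : ∀ x, 0 ≤ f x)
    (h : ℝ → ℝ) :
    ∫ x, h x ∂(volume.withDensity (fun x => ENNReal.ofReal (f x))) = ∫ x, f x * h x := by
  rw [show (fun x => ENNReal.ofReal (f x)) = (fun x => ((f x).toNNReal : ENNReal)) from rfl,
    integral_withDensity_eq_integral_smul hf.real_toNNReal]
  congr 1 with x
  rw [NNReal.smul_def, Real.coe_toNNReal _ (hf0 x), smul_eq_mul]

lemma integral_gaussianReal' (hℓ : 0 < ℓ) (h : ℝ → ℝ) :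
    ∫ x, h x ∂(gaussianReal (-ℓ^2/2) ⟨ℓ^2, sq_nonneg ℓ⟩) =
      ∫ x, gaussianPDFReal (-ℓ^2/2) ⟨ℓ^2, sq_nonneg ℓ⟩ x * h x := by
  rw [gaussianReal_of_var_ne_zero _ (v_ne_zero hℓ)]
  show ∫ x, h x ∂(volume.withDensity (fun x =>
    ENNReal.ofReal (gaussianPDFReal (-ℓ^2/2) ⟨ℓ^2, sq_nonneg ℓ⟩ x))) = _
  exact integral_withDensity_ofReal (measurable_gaussianPDFReal _ _) (gaussianPDFReal_nonneg _ _) h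

lemma pdf_eval (hℓ : 0 < ℓ) (x : ℝ) :
    gaussianPDFReal (-ℓ^2/2) ⟨ℓ^2, sq_nonneg ℓ⟩ (ℓ * x - ℓ^2/2) = phi x / ℓ := by
  unfold gaussianPDFReal phi
  change (Real.sqrt (2 * π * ℓ^2))⁻¹ *
    Real.exp (-(ℓ * x - ℓ ^ 2 / 2 - -ℓ ^ 2 / 2) ^ 2 / (2 * ℓ^2)) = _
  have h1 : Real.sqrt (2 * π * ℓ^2) = Real.sqrt (2*π) * ℓ := by
    rw [Real.sqrt_mul (by positivity), Real.sqrt_sq hℓ.le]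
  have h2 : (ℓ * x - ℓ^2/2 - (-ℓ^2/2)) = ℓ * x := by ring
  have h3 : -(ℓ*x)^2 / (2*(ℓ^2)) = -x^2/2 := by
    field_simp
  rw [h1, h2, h3]
  field_simp

lemma scale_shift (hℓ : 0 < ℓ) (h : ℝ → ℝ) :
    ∫ z, h z = ℓ * ∫ x, h (ℓ * x - ℓ^2/2) := by
  rw [← integral_add_right_eq_self h (-(ℓ^2/2))]
  simp only [sub_eq_add_neg]
  rw [Measure.integral_comp_mul_left (fun z => h (z + -(ℓ^2/2))) ℓ,
    abs_of_pos (inv_pos.2 hℓ), smul_eq_mul, ← mul_assoc, mul_inv_cancel₀ hℓ.ne', one_mul]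

lemma GA (hℓ : 0 < ℓ) (c : ℝ) :
    ∫ z, (if z + c < 0 then Real.exp (z + c) else 0)
        ∂(gaussianReal (-ℓ^2/2) ⟨ℓ^2, sq_nonneg ℓ⟩)
      = Real.exp c * stdNormalCDF (-(c/ℓ) - ℓ/2) := by
  rw [integral_gaussianReal' hℓ,
    scale_shift hℓ (fun z => gaussianPDFReal (-ℓ^2/2) ⟨ℓ^2, sq_nonneg ℓ⟩ z *
      (if z + c < 0 then Real.exp (z + c) else 0))]
  have key : (fun x : ℝ => gaussianPDFReal (-ℓ^2/2) ⟨ℓ^2, sq_nonneg ℓ⟩ (ℓ*x - ℓ^2/2) *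
      (if ℓ*x - ℓ^2/2 + c < 0 then Real.exp (ℓ*x - ℓ^2/2 + c) else 0))
      = fun x : ℝ => (Real.exp c / ℓ) * (if x < ℓ/2 - c/ℓ then phi (x - ℓ) else 0) := by
    funext x
    rw [pdf_eval hℓ]
    have heq : ℓ * (ℓ/2 - c/ℓ) = ℓ^2/2 - c := by field_simp
    by_cases hx : x < ℓ/2 - c/ℓ
    · have h5 : ℓ * x < ℓ^2/2 - c := heq ▸ (mul_lt_mul_of_pos_left hx hℓ)
      rw [if_pos (show ℓ*x - ℓ^2/2 + c < 0 by linarith), if_pos hx]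
      have : phi x * Real.exp (ℓ*x - ℓ^2/2 + c) = Real.exp c * phi (x - ℓ) := by
        unfold phi
        rw [div_mul_eq_mul_div, ← Real.exp_add, ← mul_div_assoc, ← Real.exp_add]
        congr 2
        ring
      calc phi x / ℓ * Real.exp (ℓ*x - ℓ^2/2 + c)
          = (phi x * Real.exp (ℓ*x - ℓ^2/2 + c)) / ℓ := by ring
        _ = Real.exp c / ℓ * phi (x - ℓ) := by rw [this]; ring
    · have h5 : ℓ^2/2 - c ≤ ℓ * x := heq ▸ (mul_le_mul_of_nonneg_left (not_lt.mp hx) hℓ.le)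
      rw [if_neg (show ¬(ℓ*x - ℓ^2/2 + c < 0) by intro h'; linarith), if_neg hx,
        mul_zero, mul_zero]
  rw [key, integral_const_mul]
  have shift := integral_add_right_eq_self (μ := volume)
    (fun x => if x < ℓ/2 - c/ℓ then phi (x - ℓ) else 0) ℓ
  simp only [add_sub_cancel_right] at shift
  rw [← shift]
  have hcond2 : (fun x : ℝ => if x + ℓ < ℓ/2 - c/ℓ then phi x else 0)
      = fun x : ℝ => if x < -(c/ℓ) - ℓ/2 then phi x else 0 := by
    funext x
    congr 1
    simp only [eq_iff_iff]
    constructor <;> intro h' <;> linarith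
  rw [hcond2, S1']
  field_simp

lemma GB (hℓ : 0 < ℓ) (c : ℝ) :
    ∫ z, (if 0 ≤ z + c then (1:ℝ) else 0)
        ∂(gaussianReal (-ℓ^2/2) ⟨ℓ^2, sq_nonneg ℓ⟩)
      = stdNormalCDF (c/ℓ - ℓ/2) := by
  rw [integral_gaussianReal' hℓ,
    scale_shift hℓ (fun z => gaussianPDFReal (-ℓ^2/2) ⟨ℓ^2, sq_nonneg ℓ⟩ z *
      (if 0 ≤ z + c then (1:ℝ) else 0))]
  have key : (fun x : ℝ => gaussianPDFReal (-ℓ^2/2) ⟨ℓ^2, sq_nonneg ℓ⟩ (ℓ*x - ℓ^2/2) *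
      (if 0 ≤ ℓ*x - ℓ^2/2 + c then (1:ℝ) else 0))
      = fun x : ℝ => (1/ℓ) * (if ℓ/2 - c/ℓ ≤ x then phi x else 0) := by
    funext x
    rw [pdf_eval hℓ]
    have heq : ℓ * (ℓ/2 - c/ℓ) = ℓ^2/2 - c := by field_simp
    by_cases hx : ℓ/2 - c/ℓ ≤ x
    · have h5 : ℓ^2/2 - c ≤ ℓ * x := heq ▸ (mul_le_mul_of_nonneg_left hx hℓ.le)
      rw [if_pos (show (0:ℝ) ≤ ℓ*x - ℓ^2/2 + c by linarith), if_pos hx]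
      ring
    · have h5 : ℓ * x < ℓ^2/2 - c := heq ▸ (mul_lt_mul_of_pos_left (not_le.mp hx) hℓ)
      rw [if_neg (show ¬((0:ℝ) ≤ ℓ*x - ℓ^2/2 + c) by intro h'; linarith), if_neg hx,
        mul_zero, mul_zero]
  rw [key, integral_const_mul, S2]
  rw [show -(ℓ/2 - c/ℓ) = c/ℓ - ℓ/2 by ring]
  field_simp

lemma min_split (u : ℝ) : min 1 (Real.exp u)
    = (if 0 ≤ u then (1:ℝ) else 0) + (if u < 0 then Real.exp u else 0) := by
  rcases le_or_gt 0 u with h | h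
  · rw [if_pos h, if_neg (not_lt.2 h), add_zero,
      min_eq_left (by simpa using Real.exp_le_exp.mpr h : (1:ℝ) ≤ Real.exp u)]
  · rw [if_neg (not_le.2 h), if_pos h, zero_add,
      min_eq_right (by simpa using Real.exp_le_exp.mpr h.le : Real.exp u ≤ 1)]

lemma integrable_of_bdd {α : Type*} [MeasurableSpace α] {μ : Measure α} [IsFiniteMeasure μ]
    {f : α → ℝ} (hm : AEStronglyMeasurable f μ) {C : ℝ} (h : ∀ x, ‖f x‖ ≤ C) :
    Integrable f μ :=
  (integrable_const C).mono' hm (Filter.Eventually.of_forall h)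

lemma integrable_Fp_comp {α : Type*} [MeasurableSpace α] {μ : Measure α} [IsFiniteMeasure μ]
    {u : α → ℝ} (hu : Measurable u) :
    Integrable (fun x => if u x < 0 then Real.exp (u x) else 0) μ := by
  refine integrable_of_bdd (Measurable.aestronglyMeasurable ?_) (C := 1) (fun x => ?_)
  · exact Measurable.ite (measurableSet_lt hu measurable_const)
      (Real.measurable_exp.comp hu) measurable_const
  · split
    · rw [Real.norm_eq_abs, abs_of_nonneg (Real.exp_nonneg _)]
      simpa using Real.exp_le_exp.mpr (le_of_lt ‹_›)
    · simp

lemma integrable_Fmin_comp {α : Type*} [MeasurableSpace α] {μ : Measure α} [IsFiniteMeasure μ]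
    {u : α → ℝ} (hu : Measurable u) :
    Integrable (fun x => min 1 (Real.exp (u x))) μ := by
  refine integrable_of_bdd (Measurable.aestronglyMeasurable ?_) (C := 1) (fun x => ?_)
  · exact measurable_const.min (Real.measurable_exp.comp hu)
  · rw [Real.norm_eq_abs, abs_of_nonneg (le_min zero_le_one (Real.exp_nonneg _))]
    exact min_le_left _ _

lemma GC (hℓ : 0 < ℓ) (c : ℝ) :
    ∫ z, min 1 (Real.exp (z + c)) ∂(gaussianReal (-ℓ^2/2) ⟨ℓ^2, sq_nonneg ℓ⟩)
      = stdNormalCDF (c/ℓ - ℓ/2) + Real.exp c * stdNormalCDF (-(c/ℓ) - ℓ/2) := by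
  haveI : IsProbabilityMeasure (gaussianReal (-ℓ^2/2) ⟨ℓ^2, sq_nonneg ℓ⟩) :=
    instIsProbabilityMeasureGaussianReal _ _
  have h1 : Integrable (fun z : ℝ => if 0 ≤ z + c then (1:ℝ) else 0)
      (gaussianReal (-ℓ^2/2) ⟨ℓ^2, sq_nonneg ℓ⟩) := by
    refine integrable_of_bdd (Measurable.aestronglyMeasurable ?_) (C := 1) (fun x => ?_)
    · exact Measurable.ite (measurableSet_le measurable_const (measurable_id.add_const c))
        measurable_const measurable_const
    · split <;> simp
  have h2 : Integrable (fun z : ℝ => if z + c < 0 then Real.exp (z + c) else 0)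
      (gaussianReal (-ℓ^2/2) ⟨ℓ^2, sq_nonneg ℓ⟩) :=
    integrable_Fp_comp (measurable_id.add_const c)
  calc ∫ z, min 1 (Real.exp (z + c)) ∂(gaussianReal (-ℓ^2/2) ⟨ℓ^2, sq_nonneg ℓ⟩)
      = ∫ z, ((if 0 ≤ z + c then (1:ℝ) else 0) + (if z + c < 0 then Real.exp (z + c) else 0))
          ∂(gaussianReal (-ℓ^2/2) ⟨ℓ^2, sq_nonneg ℓ⟩) := by
        refine integral_congr_ae (ae_of_all _ fun z => ?_)
        exact min_split (z + c)
    _ = _ := by rw [integral_add h1 h2, GA hℓ c, GB hℓ c]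

lemma Bf_le_one (hℓ : 0 < ℓ) (c : ℝ) :
    Real.exp c * stdNormalCDF (-(c/ℓ) - ℓ/2) ≤ 1 := by
  haveI : IsProbabilityMeasure (gaussianReal (-ℓ^2/2) ⟨ℓ^2, sq_nonneg ℓ⟩) :=
    instIsProbabilityMeasureGaussianReal _ _
  rw [← GA hℓ c]
  have h2 : (∫ _ : ℝ, (1:ℝ) ∂(gaussianReal (-ℓ^2/2) ⟨ℓ^2, sq_nonneg ℓ⟩)) = 1 := by simp
  rw [← h2]
  refine integral_mono (integrable_Fp_comp (measurable_id.add_const c)) (integrable_const 1)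
    fun z => ?_
  dsimp only
  split
  · simpa using Real.exp_le_exp.mpr (le_of_lt ‹_›)
  · norm_num

lemma integrable_of_withDensity_prob {f : ℝ → ℝ} (hm : Measurable f) (h0 : ∀ x, 0 ≤ f x)
    (hp : IsProbabilityMeasure (volume.withDensity (fun x => ENNReal.ofReal (f x)))) :
    Integrable f volume := by
  have huniv : (volume.withDensity (fun x => ENNReal.ofReal (f x))) Set.univ = 1 :=
    hp.measure_univ
  rw [withDensity_apply _ MeasurableSet.univ, setLIntegral_univ] at huniv
  refine ⟨hm.aestronglyMeasurable, ?_⟩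
  have h : ∫⁻ a, ENNReal.ofReal ‖f a‖ = 1 := by
    rw [← huniv]
    exact lintegral_congr fun x => by rw [Real.norm_eq_abs, abs_of_nonneg (h0 x)]
  rw [hasFiniteIntegral_iff_norm, h]
  exact ENNReal.one_lt_top

lemma prod_density_integral {g1 g2 : ℝ → ℝ} (h1m : Measurable g1) (h10 : ∀ x, 0 ≤ g1 x)
    (h2m : Measurable g2) (h20 : ∀ x, 0 ≤ g2 x) (K : ℝ × ℝ → ℝ)
    (hK : Integrable K ((volume.withDensity (fun x => ENNReal.ofReal (g1 x))).prod
      (volume.withDensity (fun x => ENNReal.ofReal (g2 x))))) :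
    ∫ p, K p ∂((volume.withDensity (fun x => ENNReal.ofReal (g1 x))).prod
        (volume.withDensity (fun x => ENNReal.ofReal (g2 x))))
      = ∫ x, ∫ y, g1 x * (g2 y * K (x, y)) ∂volume ∂volume := by
  rw [integral_prod _ hK, integral_withDensity_ofReal h1m h10]
  refine integral_congr_ae (ae_of_all _ fun x => ?_)
  dsimp only
  rw [integral_withDensity_ofReal h2m h20, ← integral_const_mul]

end Gauss
end Stmt16Aux

open Stmt16Aux

/-- Lemma 1, part 1: averaged drift and diffusion coefficients.
With `Ω ∼ N(−ℓ²/2, ℓ²)`, `W*` of density `g*`, `W` of density `e^w g*(w)` all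
independent, `F(u) = min(1, e^u)`, `F′(u) = e^u 1_{u<0}`,
`a(w) = E[F′(Ω + W* − w)]` and `b(w) = ½ E[F(Ω + W* − w)]`, one has
`E[a(W)] = E[b(W)] = ½ α(ℓ)` where
`α(ℓ) = E[F(Ω + W* − W)] = 2 E[Φ((W* − W)/ℓ − ℓ/2)]`. -/
theorem stmt16 (ℓ : ℝ) (hℓ : 0 < ℓ)
    (g : ℝ → ℝ) (hg_meas : Measurable g) (hg_nonneg : ∀ w, 0 ≤ g w)
    (μWs μW : Measure ℝ)
    (hμWs : μWs = volume.withDensity fun w => ENNReal.ofReal (g w))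
    (hμW : μW = volume.withDensity fun w => ENNReal.ofReal (Real.exp w * g w))
    (hμWs_prob : IsProbabilityMeasure μWs) (hμW_prob : IsProbabilityMeasure μW)
    (μΩ : Measure ℝ) (hμΩ : μΩ = gaussianReal (-ℓ ^ 2 / 2) ⟨ℓ ^ 2, sq_nonneg ℓ⟩)
    (a b : ℝ → ℝ)
    (ha : ∀ w, a w = ∫ p : ℝ × ℝ,
      (if p.1 + p.2 - w < 0 then Real.exp (p.1 + p.2 - w) else 0) ∂(μΩ.prod μWs))
    (hb : ∀ w, b w = (1 / 2) * ∫ p : ℝ × ℝ,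
      min 1 (Real.exp (p.1 + p.2 - w)) ∂(μΩ.prod μWs)) :
    (∫ w, a w ∂μW) = (1 / 2) * (∫ q : ℝ × (ℝ × ℝ),
        min 1 (Real.exp (q.1 + q.2.1 - q.2.2)) ∂(μΩ.prod (μWs.prod μW))) ∧
      (∫ w, b w ∂μW) = (1 / 2) * (∫ q : ℝ × (ℝ × ℝ),
        min 1 (Real.exp (q.1 + q.2.1 - q.2.2)) ∂(μΩ.prod (μWs.prod μW))) ∧
      (∫ q : ℝ × (ℝ × ℝ),
          min 1 (Real.exp (q.1 + q.2.1 - q.2.2)) ∂(μΩ.prod (μWs.prod μW))) =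
        2 * ∫ p : ℝ × ℝ, stdNormalCDF ((p.1 - p.2) / ℓ - ℓ / 2) ∂(μWs.prod μW) := by
  haveI hPΩ : IsProbabilityMeasure μΩ := by rw [hμΩ]; exact instIsProbabilityMeasureGaussianReal _ _
  -- Gaussian computations transported to μΩ
  have hGA : ∀ d : ℝ, (∫ z, (if z + d < 0 then Real.exp (z + d) else 0) ∂μΩ)
      = Real.exp d * stdNormalCDF (-(d/ℓ) - ℓ/2) := fun d => by
    rw [hμΩ]; exact GA hℓ d
  have hGC : ∀ d : ℝ, (∫ z, min 1 (Real.exp (z + d)) ∂μΩ)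
      = stdNormalCDF (d/ℓ - ℓ/2) + Real.exp d * stdNormalCDF (-(d/ℓ) - ℓ/2) := fun d => by
    rw [hμΩ]; exact GC hℓ d
  have hB0 : ∀ d : ℝ, 0 ≤ Real.exp d * stdNormalCDF (-(d/ℓ) - ℓ/2) :=
    fun d => mul_nonneg (Real.exp_nonneg _) (cdf_nonneg _)
  have hB1 : ∀ d : ℝ, Real.exp d * stdNormalCDF (-(d/ℓ) - ℓ/2) ≤ 1 := fun d => Bf_le_one hℓ d
  have hmeasB : Measurable fun p : ℝ × ℝ =>
      Real.exp (p.1 - p.2) * stdNormalCDF (-((p.1 - p.2)/ℓ) - ℓ/2) :=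
    (Real.measurable_exp.comp (measurable_fst.sub measurable_snd)).mul
      (cdf_measurable.comp (by fun_prop))
  have hmeasA : Measurable fun p : ℝ × ℝ => stdNormalCDF ((p.1 - p.2)/ℓ - ℓ/2) :=
    cdf_measurable.comp (by fun_prop)
  have hBint : Integrable (fun p : ℝ × ℝ =>
      Real.exp (p.1 - p.2) * stdNormalCDF (-((p.1 - p.2)/ℓ) - ℓ/2)) (μWs.prod μW) :=
    integrable_of_bdd hmeasB.aestronglyMeasurable (C := 1)
      (fun p => by rw [Real.norm_eq_abs, abs_of_nonneg (hB0 _)]; exact hB1 _)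
  have hAint : Integrable (fun p : ℝ × ℝ =>
      stdNormalCDF ((p.1 - p.2)/ℓ - ℓ/2)) (μWs.prod μW) :=
    integrable_of_bdd hmeasA.aestronglyMeasurable (C := 1)
      (fun p => by rw [Real.norm_eq_abs, abs_of_nonneg (cdf_nonneg _)]; exact cdf_le_one _)
  -- pointwise evaluation of a
  have ha' : ∀ w, a w = ∫ ws, Real.exp (ws - w) * stdNormalCDF (-((ws - w)/ℓ) - ℓ/2) ∂μWs :=
    fun w => by
    rw [ha w]
    calc (∫ p : ℝ × ℝ, (if p.1 + p.2 - w < 0 then Real.exp (p.1 + p.2 - w) else 0)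
          ∂(μΩ.prod μWs))
        = ∫ ws, ∫ x, (if x + ws - w < 0 then Real.exp (x + ws - w) else 0) ∂μΩ ∂μWs :=
          integral_prod_symm _ (integrable_Fp_comp (by fun_prop))
      _ = _ := integral_congr_ae (ae_of_all _ fun ws => by
          simp_rw [add_sub_assoc]; exact hGA (ws - w))
  -- pointwise evaluation of b
  have hb' : ∀ w, b w = (1/2) * ∫ ws, (stdNormalCDF ((ws - w)/ℓ - ℓ/2)
      + Real.exp (ws - w) * stdNormalCDF (-((ws - w)/ℓ) - ℓ/2)) ∂μWs := fun w => by
    rw [hb w]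
    congr 1
    calc (∫ p : ℝ × ℝ, min 1 (Real.exp (p.1 + p.2 - w)) ∂(μΩ.prod μWs))
        = ∫ ws, ∫ x, min 1 (Real.exp (x + ws - w)) ∂μΩ ∂μWs :=
          integral_prod_symm _ (integrable_Fmin_comp (by fun_prop))
      _ = _ := integral_congr_ae (ae_of_all _ fun ws => by
          simp_rw [add_sub_assoc]; exact hGC (ws - w))
  -- integrals of a and b over μW
  have haW : ∫ w, a w ∂μW = ∫ p : ℝ × ℝ,
      Real.exp (p.1 - p.2) * stdNormalCDF (-((p.1 - p.2)/ℓ) - ℓ/2) ∂(μWs.prod μW) := by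
    calc ∫ w, a w ∂μW
        = ∫ w, ∫ ws, Real.exp (ws - w) * stdNormalCDF (-((ws - w)/ℓ) - ℓ/2) ∂μWs ∂μW :=
          integral_congr_ae (ae_of_all _ fun w => ha' w)
      _ = _ := (integral_prod_symm _ hBint).symm
  have hbW : ∫ w, b w ∂μW = (1/2) * ∫ p : ℝ × ℝ, (stdNormalCDF ((p.1 - p.2)/ℓ - ℓ/2)
      + Real.exp (p.1 - p.2) * stdNormalCDF (-((p.1 - p.2)/ℓ) - ℓ/2)) ∂(μWs.prod μW) := by
    calc ∫ w, b w ∂μW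
        = ∫ w, (1/2) * ∫ ws, (stdNormalCDF ((ws - w)/ℓ - ℓ/2)
            + Real.exp (ws - w) * stdNormalCDF (-((ws - w)/ℓ) - ℓ/2)) ∂μWs ∂μW :=
          integral_congr_ae (ae_of_all _ fun w => hb' w)
      _ = (1/2) * ∫ w, ∫ ws, (stdNormalCDF ((ws - w)/ℓ - ℓ/2)
            + Real.exp (ws - w) * stdNormalCDF (-((ws - w)/ℓ) - ℓ/2)) ∂μWs ∂μW :=
          integral_const_mul _ _
      _ = _ := congrArg (fun t => (1/2 : ℝ) * t) (integral_prod_symm _ (hAint.add hBint)).symm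
  -- the triple integral
  have hT : (∫ q : ℝ × (ℝ × ℝ), min 1 (Real.exp (q.1 + q.2.1 - q.2.2))
        ∂(μΩ.prod (μWs.prod μW)))
      = ∫ p : ℝ × ℝ, (stdNormalCDF ((p.1 - p.2)/ℓ - ℓ/2)
        + Real.exp (p.1 - p.2) * stdNormalCDF (-((p.1 - p.2)/ℓ) - ℓ/2)) ∂(μWs.prod μW) := by
    have hint3 : Integrable (fun q : ℝ × (ℝ × ℝ) => min 1 (Real.exp (q.1 + q.2.1 - q.2.2)))
        (μΩ.prod (μWs.prod μW)) := integrable_Fmin_comp (by fun_prop)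
    calc (∫ q : ℝ × (ℝ × ℝ), min 1 (Real.exp (q.1 + q.2.1 - q.2.2)) ∂(μΩ.prod (μWs.prod μW)))
        = ∫ x, ∫ p : ℝ × ℝ, min 1 (Real.exp (x + p.1 - p.2)) ∂(μWs.prod μW) ∂μΩ :=
          integral_prod _ hint3
      _ = ∫ p : ℝ × ℝ, ∫ x, min 1 (Real.exp (x + p.1 - p.2)) ∂μΩ ∂(μWs.prod μW) :=
          integral_integral_swap hint3
      _ = _ := integral_congr_ae (ae_of_all _ fun p => by
          simp_rw [add_sub_assoc]; exact hGC (p.1 - p.2))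
  -- the exchange identity
  have hexch : (∫ p : ℝ × ℝ,
        Real.exp (p.1 - p.2) * stdNormalCDF (-((p.1 - p.2)/ℓ) - ℓ/2) ∂(μWs.prod μW))
      = ∫ p : ℝ × ℝ, stdNormalCDF ((p.1 - p.2)/ℓ - ℓ/2) ∂(μWs.prod μW) := by
    have hgInt : Integrable g volume :=
      integrable_of_withDensity_prob hg_meas hg_nonneg (hμWs ▸ hμWs_prob)
    have hEg_meas : Measurable fun y => Real.exp y * g y := Real.measurable_exp.mul hg_meas
    have hEg_nonneg : ∀ y, 0 ≤ Real.exp y * g y :=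
      fun y => mul_nonneg (Real.exp_nonneg _) (hg_nonneg y)
    have hEgInt : Integrable (fun y => Real.exp y * g y) volume :=
      integrable_of_withDensity_prob hEg_meas hEg_nonneg (hμW ▸ hμW_prob)
    rw [hμWs, hμW] at hBint hAint ⊢
    have hkmeas : Measurable fun p : ℝ × ℝ => g p.1 * ((Real.exp p.2 * g p.2) *
        (Real.exp (p.1 - p.2) * stdNormalCDF (-((p.1 - p.2)/ℓ) - ℓ/2))) :=
      (hg_meas.comp measurable_fst).mul
        (((Real.measurable_exp.comp measurable_snd).mul (hg_meas.comp measurable_snd)).mul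
          hmeasB)
    have hkint : Integrable (fun p : ℝ × ℝ => g p.1 * ((Real.exp p.2 * g p.2) *
        (Real.exp (p.1 - p.2) * stdNormalCDF (-((p.1 - p.2)/ℓ) - ℓ/2))))
        (volume.prod volume) := by
      refine (hgInt.mul_prod hEgInt).mono' hkmeas.aestronglyMeasurable
        (Filter.Eventually.of_forall fun p => ?_)
      rw [Real.norm_eq_abs, abs_mul, abs_mul, abs_of_nonneg (hg_nonneg _),
        abs_of_nonneg (hEg_nonneg _), abs_of_nonneg (hB0 _)]
      calc g p.1 * (Real.exp p.2 * g p.2 *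
            (Real.exp (p.1 - p.2) * stdNormalCDF (-((p.1 - p.2)/ℓ) - ℓ/2)))
          ≤ g p.1 * (Real.exp p.2 * g p.2 * 1) :=
            mul_le_mul_of_nonneg_left
              (mul_le_mul_of_nonneg_left (hB1 _) (hEg_nonneg _)) (hg_nonneg _)
        _ = g p.1 * (Real.exp p.2 * g p.2) := by ring
    calc (∫ p : ℝ × ℝ, Real.exp (p.1 - p.2) * stdNormalCDF (-((p.1 - p.2)/ℓ) - ℓ/2)
          ∂((volume.withDensity (fun x => ENNReal.ofReal (g x))).prod
            (volume.withDensity (fun x => ENNReal.ofReal (Real.exp x * g x)))))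
        = ∫ x, ∫ y, g x * ((Real.exp y * g y) *
            (Real.exp (x - y) * stdNormalCDF (-((x - y)/ℓ) - ℓ/2))) ∂volume ∂volume :=
          prod_density_integral hg_meas hg_nonneg hEg_meas hEg_nonneg _ hBint
      _ = ∫ y, ∫ x, g x * ((Real.exp y * g y) *
            (Real.exp (x - y) * stdNormalCDF (-((x - y)/ℓ) - ℓ/2))) ∂volume ∂volume :=
          integral_integral_swap hkint
      _ = ∫ x, ∫ y, g x * ((Real.exp y * g y) *
            stdNormalCDF ((x - y)/ℓ - ℓ/2)) ∂volume ∂volume := by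
          refine integral_congr_ae (ae_of_all _ fun u => ?_)
          refine integral_congr_ae (ae_of_all _ fun v => ?_)
          dsimp only
          have hPhi : -((v - u)/ℓ) - ℓ/2 = (u - v)/ℓ - ℓ/2 := by rw [← neg_div, neg_sub]
          have hE : Real.exp u * Real.exp (v - u) = Real.exp v := by
            rw [← Real.exp_add, show u + (v - u) = v by ring]
          rw [hPhi, ← hE]
          ring
      _ = ∫ p : ℝ × ℝ, stdNormalCDF ((p.1 - p.2)/ℓ - ℓ/2)
          ∂((volume.withDensity (fun x => ENNReal.ofReal (g x))).prod
            (volume.withDensity (fun x => ENNReal.ofReal (Real.exp x * g x)))) :=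
          (prod_density_integral hg_meas hg_nonneg hEg_meas hEg_nonneg _ hAint).symm
  refine ⟨?_, ?_, ?_⟩
  · rw [haW, hexch, hT, integral_add hAint hBint, hexch]
    ring
  · rw [hbW, hT, integral_add hAint hBint, hexch]
  · rw [hT, integral_add hAint hBint, hexch]
    ring
end

section
/- (Lemma 3: vanishing of window sums of Gaussian absolute values.) Let (ξ_k)_{k≥1} be an i.i.d. sequence of standard Gaussian N(0,1) random variables, let T > 0, let 0 < γ < 1/4, and for each integer d ≥ 1 set T_d = ⌊d^γ⌋ and δ = 1/d. Then E[ max { δ · Σ_{k=i}^{j} |ξ_k| : 0 ≤ i < j ≤ d·T, j − i ≤ T_d } ] → 0 as d → ∞. -/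
open MeasureTheory ProbabilityTheory Real Filter Topology

lemma gauss_sq_integrable' : Integrable (fun x : ℝ => x ^ 2) (gaussianReal 0 1) := by
  rw [gaussianReal_of_var_ne_zero 0 one_ne_zero]
  rw [integrable_withDensity_iff (measurable_gaussianPDF 0 1)
    (ae_of_all _ fun x => ENNReal.ofReal_lt_top)]
  have h := (integrable_rpow_mul_exp_neg_mul_sq (by norm_num : (0:ℝ) < 1/2)
    (s := 2) (by norm_num)).mul_const ((Real.sqrt (2 * π))⁻¹)
  refine h.congr (ae_of_all _ fun x => ?_)
  simp only [gaussianPDF, gaussianPDFReal, Real.rpow_two]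
  rw [ENNReal.toReal_ofReal (by positivity)]
  push_cast
  ring_nf

lemma abs_le_add_sq_div' {b : ℝ} (hb : 0 < b) (x : ℝ) : |x| ≤ b + x ^ 2 / (4 * b) := by
  have h1 : 4 * b * |x| ≤ 4 * b ^ 2 + x ^ 2 := by
    nlinarith [sq_nonneg (|x| - 2 * b), sq_abs x]
  have h2 : (0:ℝ) < 4 * b := by linarith
  calc |x| = (4 * b * |x|) / (4 * b) := by field_simp
    _ ≤ (4 * b ^ 2 + x ^ 2) / (4 * b) := by gcongr
    _ = b + x ^ 2 / (4 * b) := by field_simp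

/-- Lemma 3: vanishing of window sums of Gaussian absolute values.
For `(ξ_k)` i.i.d. standard Gaussian, `T > 0`, `0 < γ < 1/4`, `T_d = ⌊d^γ⌋` and
`δ = 1/d`, the expectation of the maximum of `δ Σ_{k=i}^j |ξ_k|` over all windows
`0 ≤ i < j ≤ dT` of length `j − i ≤ T_d` tends to `0` as `d → ∞`. -/
theorem stmt18 {Ω : Type*} [MeasurableSpace Ω] (P : Measure Ω)
    [IsProbabilityMeasure P] (ξ : ℕ → Ω → ℝ) (hmeas : ∀ k, Measurable (ξ k))
    (hindep : iIndepFun ξ P)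
    (hlaw : ∀ k, Measure.map (ξ k) P = gaussianReal 0 1)
    (T : ℝ) (hT : 0 < T) (γ : ℝ) (hγ0 : 0 < γ) (hγ : γ < 1 / 4) :
    Tendsto (fun d : ℕ => ∫ ω,
        sSup {y : ℝ | ∃ i j : ℕ, i < j ∧ (j : ℝ) ≤ d * T ∧
          j - i ≤ ⌊(d : ℝ) ^ γ⌋₊ ∧
          y = (1 / (d : ℝ)) * ∑ k ∈ Finset.Icc i j, |ξ k ω|} ∂P)
      atTop (𝓝 0) := by
  set C := ∫ x, x ^ 2 ∂(gaussianReal 0 1) with hCdef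
  have hC0 : 0 ≤ C := integral_nonneg fun x => sq_nonneg x
  have hint : ∀ k, Integrable (fun ω => (ξ k ω) ^ 2) P := by
    intro k
    have hg : AEStronglyMeasurable (fun x : ℝ => x ^ 2) (Measure.map (ξ k) P) :=
      (measurable_id.pow_const 2).aestronglyMeasurable
    have h := gauss_sq_integrable'
    rw [← hlaw k, integrable_map_measure hg (hmeas k).aemeasurable] at h
    exact h
  have hmom : ∀ k, ∫ ω, (ξ k ω) ^ 2 ∂P = C := by
    intro k
    have hg : AEStronglyMeasurable (fun x : ℝ => x ^ 2) (Measure.map (ξ k) P) :=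
      (measurable_id.pow_const 2).aestronglyMeasurable
    rw [hCdef, ← hlaw k, integral_map (hmeas k).aemeasurable hg]
  have hBtend : Tendsto (fun d : ℕ => (2 + (T + 1) * C / 4) * (d : ℝ) ^ (γ - 1/2))
      atTop (𝓝 0) := by
    have h1 : Tendsto (fun x : ℝ => x ^ (γ - 1/2)) atTop (𝓝 0) := by
      have := tendsto_rpow_neg_atTop (y := 1/2 - γ) (by linarith)
      simpa [neg_sub] using this
    have h2 := (h1.comp tendsto_natCast_atTop_atTop).const_mul (2 + (T + 1) * C / 4)
    simpa using h2
  refine tendsto_of_tendsto_of_tendsto_of_le_of_le' tendsto_const_nhds hBtend ?_ ?_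
  · filter_upwards with d
    refine integral_nonneg fun ω => ?_
    refine Real.sSup_nonneg fun y hy => ?_
    obtain ⟨i, j, hij, hjT, hlen, rfl⟩ := hy
    positivity
  · filter_upwards [eventually_ge_atTop 1] with d hd
    set x : ℝ := (d : ℝ) with hxdef
    have hx1 : (1:ℝ) ≤ x := by rw [hxdef]; exact_mod_cast hd
    have hx0 : (0:ℝ) < x := by linarith
    have hxne : x ≠ 0 := hx0.ne'
    set b : ℝ := Real.sqrt x with hbdef
    have hbe : b = x ^ ((1:ℝ)/2) := Real.sqrt_eq_rpow x
    have hb0 : 0 < b := Real.sqrt_pos.mpr hx0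
    set n : ℕ := ⌊x * T⌋₊ with hndef
    set Td : ℕ := ⌊x ^ γ⌋₊ with hTddef
    set Q : Ω → ℝ := fun ω => ∑ k ∈ Finset.range (n + 1), (ξ k ω) ^ 2 with hQdef
    have hQint : Integrable Q P := integrable_finset_sum _ fun k _ => hint k
    have hQ0 : ∀ ω, 0 ≤ Q ω := fun ω => Finset.sum_nonneg fun k _ => sq_nonneg _
    set h : Ω → ℝ := fun ω => (1/x) * (((Td:ℝ) + 1) * b + Q ω / (4 * b)) with hhdef
    have hhint : Integrable h P :=
      (((integrable_const _).add (hQint.div_const _)).const_mul _)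
    -- pointwise bound on the sSup
    have hle : ∀ ω, sSup {y : ℝ | ∃ i j : ℕ, i < j ∧ (j : ℝ) ≤ d * T ∧
          j - i ≤ ⌊(d : ℝ) ^ γ⌋₊ ∧
          y = (1 / (d : ℝ)) * ∑ k ∈ Finset.Icc i j, |ξ k ω|} ≤ h ω := by
      intro ω
      refine Real.sSup_le (fun y hy => ?_) (by positivity)
      obtain ⟨i, j, hij, hjT, hlen, rfl⟩ := hy
      have hjn : j ≤ n := Nat.le_floor hjT
      have hsub : Finset.Icc i j ⊆ Finset.range (n + 1) := by
        intro k hk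
        simp only [Finset.mem_Icc] at hk
        exact Finset.mem_range.2 (Nat.lt_succ_of_le (hk.2.trans hjn))
      have hcard : ((Finset.Icc i j).card : ℝ) ≤ (Td : ℝ) + 1 := by
        have : (Finset.Icc i j).card = (j - i) + 1 := by rw [Nat.card_Icc]; omega
        rw [this]
        exact_mod_cast Nat.succ_le_succ hlen
      have hsum : ∑ k ∈ Finset.Icc i j, |ξ k ω| ≤ ((Td:ℝ) + 1) * b + Q ω / (4 * b) := by
        calc ∑ k ∈ Finset.Icc i j, |ξ k ω|
            ≤ ∑ k ∈ Finset.Icc i j, (b + (ξ k ω) ^ 2 / (4 * b)) :=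
              Finset.sum_le_sum fun k _ => abs_le_add_sq_div' hb0 _
          _ = ((Finset.Icc i j).card : ℝ) * b
              + (∑ k ∈ Finset.Icc i j, (ξ k ω) ^ 2) / (4 * b) := by
              rw [Finset.sum_add_distrib, Finset.sum_const, nsmul_eq_mul, Finset.sum_div]
          _ ≤ ((Td:ℝ) + 1) * b + Q ω / (4 * b) := by
              gcongr
              exact Finset.sum_le_sum_of_subset_of_nonneg hsub fun k _ _ => sq_nonneg _
      calc (1 / (d:ℝ)) * ∑ k ∈ Finset.Icc i j, |ξ k ω|
          ≤ (1 / x) * (((Td:ℝ) + 1) * b + Q ω / (4 * b)) := by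
            exact mul_le_mul_of_nonneg_left hsum (by positivity)
        _ = h ω := rfl
    have hstep : (∫ ω, sSup {y : ℝ | ∃ i j : ℕ, i < j ∧ (j : ℝ) ≤ d * T ∧
          j - i ≤ ⌊(d : ℝ) ^ γ⌋₊ ∧
          y = (1 / (d : ℝ)) * ∑ k ∈ Finset.Icc i j, |ξ k ω|} ∂P) ≤ ∫ ω, h ω ∂P := by
      refine integral_mono_of_nonneg (ae_of_all _ fun ω => ?_) hhint (ae_of_all _ hle)
      refine Real.sSup_nonneg fun y hy => ?_
      obtain ⟨i, j, hij, hjT, hlen, rfl⟩ := hy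
      positivity
    have hinth : ∫ ω, h ω ∂P = (1/x) * (((Td:ℝ) + 1) * b + ((n:ℝ) + 1) * C / (4 * b)) := by
      rw [hhdef]
      rw [integral_const_mul]
      congr 1
      rw [integral_add (integrable_const _) (hQint.div_const _)]
      congr 1
      · simp
      · rw [integral_div, hQdef]
        rw [integral_finset_sum _ fun k _ => hint k]
        simp only [hmom, Finset.sum_const, Finset.card_range, nsmul_eq_mul]
        push_cast
        ring
    refine hstep.trans (hinth.le.trans ?_)
    -- now pure real-number estimates
    have hxg1 : (1:ℝ) ≤ x ^ γ := by
      have := Real.rpow_le_rpow_of_exponent_le hx1 hγ0.le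
      rwa [Real.rpow_zero] at this
    have hTdle : (Td : ℝ) ≤ x ^ γ := Nat.floor_le (by positivity)
    have hnle : (n : ℝ) ≤ x * T := Nat.floor_le (by positivity)
    have hterm1 : (1/x) * (((Td:ℝ) + 1) * b) ≤ 2 * x ^ (γ - 1/2) := by
      have hid : (1/x) * ((2 * x ^ γ) * b) = 2 * x ^ (γ - 1/2) := by
        have hxe : x ^ (γ - 1/2) = x ^ (-1:ℝ) * (x ^ γ * x ^ ((1:ℝ)/2)) := by
          rw [← Real.rpow_add hx0, ← Real.rpow_add hx0]; congr 1; ring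
        rw [hbe, hxe, Real.rpow_neg_one]
        field_simp
      rw [← hid]
      exact mul_le_mul_of_nonneg_left
        (mul_le_mul_of_nonneg_right (by linarith) hb0.le) (by positivity)
    have hterm2 : (1/x) * (((n:ℝ) + 1) * C / (4 * b)) ≤ ((T + 1) * C / 4) * x ^ (γ - 1/2) := by
      have hmono : x ^ (-(1:ℝ)/2) ≤ x ^ (γ - 1/2) :=
        Real.rpow_le_rpow_of_exponent_le hx1 (by linarith)
      have hid : (1/x) * ((x * (T + 1)) * C / (4 * b)) = ((T + 1) * C / 4) * x ^ (-(1:ℝ)/2) := by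
        have hxe : x ^ (-(1:ℝ)/2) = (x ^ ((1:ℝ)/2))⁻¹ := by
          rw [neg_div, Real.rpow_neg hx0.le]
        rw [hbe, hxe]
        have hbne : x ^ ((1:ℝ)/2) ≠ 0 := by
          rw [← hbe]; exact hb0.ne'
        field_simp
      have hstep1 : (1/x) * (((n:ℝ) + 1) * C / (4 * b)) ≤ (1/x) * ((x * (T + 1)) * C / (4 * b)) := by
        have h1 : ((n:ℝ) + 1) ≤ x * (T + 1) := by nlinarith
        have h2 : ((n:ℝ) + 1) * C / (4 * b) ≤ (x * (T + 1)) * C / (4 * b) := by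
          apply div_le_div_of_nonneg_right ?_ (by positivity)
          exact mul_le_mul_of_nonneg_right h1 hC0
        exact mul_le_mul_of_nonneg_left h2 (by positivity)
      refine hstep1.trans ?_
      rw [hid]
      have hc : 0 ≤ (T + 1) * C / 4 := by positivity
      exact mul_le_mul_of_nonneg_left hmono hc
    calc (1/x) * (((Td:ℝ) + 1) * b + ((n:ℝ) + 1) * C / (4 * b))
        = (1/x) * (((Td:ℝ) + 1) * b) + (1/x) * (((n:ℝ) + 1) * C / (4 * b)) := by ring
      _ ≤ 2 * x ^ (γ - 1/2) + ((T + 1) * C / 4) * x ^ (γ - 1/2) := add_le_add hterm1 hterm2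
      _ = (2 + (T + 1) * C / 4) * x ^ (γ - 1/2) := by ring
end
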